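/- arXiv:2602.04134 — 5 statements merged into one kernel-verified Lean document; each statement's English description precedes it below -/
import Mathlib

section
/- (Mixed Schwarz inequality) For every bounded linear operator A on a complex Hilbert space H and every unit vector x ∈ H, |⟨Ax, x⟩|² ≤ ⟨|A|x, x⟩ · ⟨|A*|x, x⟩, where |A| = (A*A)^{1/2} and |A*| = (AA*)^{1/2}. -/
/-!
The operator `T = [[0, A*], [A, 0]]` on `H ⊕ H` is self-adjoint, `|T| = |A| ⊕ |A*|`, and
`⟪A x, x⟫ = ⟪T (x, 0), (0, x)⟫`. So it suffices to show `|⟪T u, v⟫|² ≤ ⟪|T| u, u⟫ ⟪|T| v, v⟫`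
for self-adjoint `T`. The functional calculus factors `T = k s` with `k, s` self-adjoint and
`k² = s² = |T|`; then `⟪T u, v⟫ = ⟪s u, k v⟫`, and Cauchy–Schwarz gives the bound because
`‖s u‖² = ⟪|T| u, u⟫` and `‖k v‖² = ⟪|T| v, v⟫`.
-/

open ContinuousLinearMap

/-- The numerical radius of a bounded operator. -/
noncomputable def numRad {H : Type*} [NormedAddCommGroup H] [InnerProductSpace ℂ H]
    (A : H →L[ℂ] H) : ℝ :=
  sSup {r : ℝ | ∃ x : H, ‖x‖ = 1 ∧ r = ‖(inner ℂ (A x) x : ℂ)‖}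

open scoped InnerProductSpace
open RCLike

section Factorization

variable {A : Type*} [NonUnitalCStarAlgebra A] [PartialOrder A] [StarOrderedRing A]

/-- `√t - √(-t)` and `√t + √(-t)` are `√t⁺ - √t⁻` and `√t⁺ + √t⁻`, as `Real.sqrt` vanishes on
negatives; since `t⁺ t⁻ = 0`, their product is `t` and both squares are `|t|`. -/
theorem IsSelfAdjoint.exists_mul_eq_and_star_mul_self_eq_abs {a : A} (ha : IsSelfAdjoint a) :
    ∃ k s : A, k * s = a ∧ star s * s = CFC.abs a ∧ k * star k = CFC.abs a := by
  set f : ℝ → ℝ := fun t => √t - √(-t)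
  set g : ℝ → ℝ := fun t => √t + √(-t)
  have hfg : ∀ t, f t * g t = t ∧ f t * f t = |t| ∧ g t * g t = |t| := fun t => by
    rcases le_total 0 t with ht | ht
    · simp [f, g, Real.sqrt_eq_zero'.mpr (neg_nonpos.mpr ht), Real.mul_self_sqrt ht,
        abs_of_nonneg ht]
    · simp [f, g, Real.sqrt_eq_zero'.mpr ht, Real.mul_self_sqrt (neg_nonneg.mpr ht),
        abs_of_nonpos ht]
  have habs : CFC.abs a = cfcₙ (fun t : ℝ => |t|) a := CFC.abs_eq_cfcₙ_norm a ha
  refine ⟨cfcₙ f a, cfcₙ g a, ?_, ?_, ?_⟩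
  · rw [← cfcₙ_mul f g a, cfcₙ_congr fun t _ => (hfg t).1, cfcₙ_id' ℝ a]
  · rw [(cfcₙ_predicate g a).star_eq, ← cfcₙ_mul g g a, habs, cfcₙ_congr fun t _ => (hfg t).2.2]
  · rw [(cfcₙ_predicate f a).star_eq, ← cfcₙ_mul f f a, habs, cfcₙ_congr fun t _ => (hfg t).2.1]

end Factorization

section CauchySchwarz

variable {𝕜 E F G : Type*} [RCLike 𝕜]
  [NormedAddCommGroup E] [InnerProductSpace 𝕜 E] [CompleteSpace E]
  [NormedAddCommGroup F] [InnerProductSpace 𝕜 F] [CompleteSpace F]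
  [NormedAddCommGroup G] [InnerProductSpace 𝕜 G] [CompleteSpace G]

theorem ContinuousLinearMap.norm_inner_comp_apply_sq_le (K : F →L[𝕜] G) (S : E →L[𝕜] F)
    (u : E) (v : G) :
    ‖⟪(K ∘L S) u, v⟫_𝕜‖ ^ 2 ≤ re ⟪(adjoint S ∘L S) u, u⟫_𝕜 * re ⟪(K ∘L adjoint K) v, v⟫_𝕜 := by
  have hK : ‖adjoint K v‖ ^ 2 = re ⟪(K ∘L adjoint K) v, v⟫_𝕜 := by
    simpa using apply_norm_sq_eq_inner_adjoint_left (adjoint K) v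
  rw [← apply_norm_sq_eq_inner_adjoint_left, ← hK, ← mul_pow, comp_apply,
    ← adjoint_inner_right]
  gcongr
  exact norm_inner_le_norm _ _

end CauchySchwarz

theorem IsSelfAdjoint.norm_inner_apply_sq_le {E : Type*} [NormedAddCommGroup E]
    [InnerProductSpace ℂ E] [CompleteSpace E] {T : E →L[ℂ] E} (hT : IsSelfAdjoint T) (u v : E) :
    ‖⟪T u, v⟫_ℂ‖ ^ 2 ≤ re ⟪CFC.abs T u, u⟫_ℂ * re ⟪CFC.abs T v, v⟫_ℂ := by
  obtain ⟨K, S, hKS, hS, hK⟩ := hT.exists_mul_eq_and_star_mul_self_eq_abs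
  rw [star_eq_adjoint] at hS hK
  simpa only [← mul_def, hKS, hS, hK] using norm_inner_comp_apply_sq_le K S u v

namespace ContinuousLinearMap

section Block

variable {𝕜 E F : Type*} [RCLike 𝕜]
  [NormedAddCommGroup E] [InnerProductSpace 𝕜 E] [NormedAddCommGroup F] [InnerProductSpace 𝕜 F]

noncomputable def blockDiag (P : E →L[𝕜] E) (Q : F →L[𝕜] F) :
    WithLp 2 (E × F) →L[𝕜] WithLp 2 (E × F) :=
  (WithLp.prodContinuousLinearEquiv 2 𝕜 E F).symm.toContinuousLinearMap ∘L P.prodMap Q ∘L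
    (WithLp.prodContinuousLinearEquiv 2 𝕜 E F).toContinuousLinearMap

@[simp]
theorem blockDiag_apply (P : E →L[𝕜] E) (Q : F →L[𝕜] F) (w : WithLp 2 (E × F)) :
    blockDiag P Q w = WithLp.toLp 2 (P w.ofLp.1, Q w.ofLp.2) :=
  rfl

theorem blockDiag_mul_blockDiag (P P' : E →L[𝕜] E) (Q Q' : F →L[𝕜] F) :
    blockDiag P Q * blockDiag P' Q' = blockDiag (P * P') (Q * Q') :=
  rfl

theorem IsPositive.blockDiag {P : E →L[𝕜] E} {Q : F →L[𝕜] F} (hP : P.IsPositive)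
    (hQ : Q.IsPositive) : (blockDiag P Q).IsPositive := by
  refine ⟨fun w z => ?_, fun w => ?_⟩
  · exact congrArg₂ (· + ·) (hP.inner_left_eq_inner_right _ _) (hQ.inner_left_eq_inner_right _ _)
  · simpa only [reApplyInnerSelf, blockDiag_apply, WithLp.prod_inner_apply, map_add] using
      add_nonneg (hP.re_inner_nonneg_left w.ofLp.1) (hQ.re_inner_nonneg_left w.ofLp.2)

variable [CompleteSpace E] [CompleteSpace F]

/-- The Hermitian dilation `[[0, A†], [A, 0]]` of `A : E →L F`. -/
noncomputable def hermitianDilation (A : E →L[𝕜] F) : WithLp 2 (E × F) →L[𝕜] WithLp 2 (E × F) :=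
  (WithLp.prodContinuousLinearEquiv 2 𝕜 E F).symm.toContinuousLinearMap ∘L
    (adjoint A ∘L snd 𝕜 E F).prod (A ∘L fst 𝕜 E F) ∘L
    (WithLp.prodContinuousLinearEquiv 2 𝕜 E F).toContinuousLinearMap

@[simp]
theorem hermitianDilation_apply (A : E →L[𝕜] F) (w : WithLp 2 (E × F)) :
    hermitianDilation A w = WithLp.toLp 2 (adjoint A w.ofLp.2, A w.ofLp.1) :=
  rfl

theorem isSelfAdjoint_hermitianDilation (A : E →L[𝕜] F) : IsSelfAdjoint (hermitianDilation A) := by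
  rw [isSelfAdjoint_iff_isSymmetric]
  intro w z
  simp only [coe_coe, hermitianDilation_apply, WithLp.prod_inner_apply, adjoint_inner_left,
    adjoint_inner_right]
  exact add_comm _ _

theorem hermitianDilation_mul_self (A : E →L[𝕜] F) :
    hermitianDilation A * hermitianDilation A = blockDiag (adjoint A ∘L A) (A ∘L adjoint A) :=
  rfl

end Block

set_option synthInstance.maxHeartbeats 40000 in
theorem abs_hermitianDilation {E F : Type*} [NormedAddCommGroup E] [InnerProductSpace ℂ E]
    [CompleteSpace E] [NormedAddCommGroup F] [InnerProductSpace ℂ F] [CompleteSpace F]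
    {A : E →L[ℂ] F} {P : E →L[ℂ] E} {Q : F →L[ℂ] F}
    (hP : P.IsPositive) (hP2 : P * P = adjoint A ∘L A)
    (hQ : Q.IsPositive) (hQ2 : Q * Q = A ∘L adjoint A) :
    CFC.abs (hermitianDilation A) = blockDiag P Q := by
  rw [CFC.abs, (isSelfAdjoint_hermitianDilation A).star_eq, hermitianDilation_mul_self, ← hP2,
    ← hQ2, ← blockDiag_mul_blockDiag]
  exact CFC.sqrt_mul_self _ ((nonneg_iff_isPositive _).mpr (hP.blockDiag hQ))

end ContinuousLinearMap

theorem mixed_schwarz_general {H : Type*} [NormedAddCommGroup H] [InnerProductSpace ℂ H]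
    [CompleteSpace H] (A P Q : H →L[ℂ] H)
    (hP : P.IsPositive) (hP2 : P * P = adjoint A * A)
    (hQ : Q.IsPositive) (hQ2 : Q * Q = A * adjoint A)
    (x : H) :
    ‖(inner ℂ (A x) x : ℂ)‖ ^ 2 ≤ (inner ℂ (P x) x : ℂ).re * (inner ℂ (Q x) x : ℂ).re := by
  have key := (isSelfAdjoint_hermitianDilation A).norm_inner_apply_sq_le
    (WithLp.toLp 2 (x, 0)) (WithLp.toLp 2 (0, x))
  rw [abs_hermitianDilation hP hP2 hQ hQ2] at key
  simpa [WithLp.prod_inner_apply] using key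

/-- Mixed Schwarz inequality: P = |A|, Q = |A*| are the positive square roots. -/
theorem mixed_schwarz {H : Type*} [NormedAddCommGroup H] [InnerProductSpace ℂ H]
    [CompleteSpace H] (A P Q : H →L[ℂ] H)
    (hP : P.IsPositive) (hP2 : P * P = adjoint A * A)
    (hQ : Q.IsPositive) (hQ2 : Q * Q = A * adjoint A)
    (x : H) (hx : ‖x‖ = 1) :
    ‖(inner ℂ (A x) x : ℂ)‖ ^ 2 ≤ (inner ℂ (P x) x : ℂ).re * (inner ℂ (Q x) x : ℂ).re :=
  mixed_schwarz_general A P Q hP hP2 hQ hQ2 x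
end

section
/- (Kittaneh's inequality) For every bounded linear operator A on a complex Hilbert space, w(A)² ≤ (1/2)‖ |A|² + |A*|² ‖ = (1/2)‖A*A + AA*‖. -/
open ContinuousLinearMap

/-!
For a unit vector `x`, Cauchy–Schwarz applied to `⟪A x, x⟫` and to `⟪x, A* x⟫` (the same number)
gives `|⟪A x, x⟫|² ≤ ‖A x‖ ‖A* x‖ ≤ ½ (‖A x‖² + ‖A* x‖²)`, and the last sum is
`re ⟪(A*A + AA*) x, x⟫ ≤ ‖A*A + AA*‖`.
-/

open scoped InnerProductSpace

namespace ContinuousLinearMap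

variable {𝕜 E : Type*} [RCLike 𝕜] [NormedAddCommGroup E] [InnerProductSpace 𝕜 E]
  [CompleteSpace E]

theorem norm_inner_apply_self_sq_le_mul_norm_adjoint_apply (A : E →L[𝕜] E) (x : E) :
    ‖⟪A x, x⟫_𝕜‖ ^ 2 ≤ ‖A x‖ * ‖adjoint A x‖ * ‖x‖ ^ 2 := by
  have hA : ‖⟪A x, x⟫_𝕜‖ ≤ ‖A x‖ * ‖x‖ := norm_inner_le_norm _ _
  have hA' : ‖⟪A x, x⟫_𝕜‖ ≤ ‖x‖ * ‖adjoint A x‖ := by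
    rw [← adjoint_inner_right]
    exact norm_inner_le_norm _ _
  calc ‖⟪A x, x⟫_𝕜‖ ^ 2 = ‖⟪A x, x⟫_𝕜‖ * ‖⟪A x, x⟫_𝕜‖ := sq _
    _ ≤ (‖A x‖ * ‖x‖) * (‖x‖ * ‖adjoint A x‖) := mul_le_mul hA hA' (norm_nonneg _) (by positivity)
    _ = ‖A x‖ * ‖adjoint A x‖ * ‖x‖ ^ 2 := by ring

theorem norm_apply_sq_add_norm_adjoint_apply_sq (A : E →L[𝕜] E) (x : E) :
    ‖A x‖ ^ 2 + ‖adjoint A x‖ ^ 2 = RCLike.re ⟪(adjoint A * A + A * adjoint A) x, x⟫_𝕜 := by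
  rw [apply_norm_sq_eq_inner_adjoint_left, apply_norm_sq_eq_inner_adjoint_left (adjoint A),
    adjoint_adjoint, add_apply, inner_add_left, map_add]
  rfl

theorem norm_apply_sq_add_norm_adjoint_apply_sq_le (A : E →L[𝕜] E) (x : E) :
    ‖A x‖ ^ 2 + ‖adjoint A x‖ ^ 2 ≤ ‖adjoint A * A + A * adjoint A‖ * ‖x‖ ^ 2 := by
  set T := adjoint A * A + A * adjoint A
  calc ‖A x‖ ^ 2 + ‖adjoint A x‖ ^ 2 = RCLike.re ⟪T x, x⟫_𝕜 :=
        norm_apply_sq_add_norm_adjoint_apply_sq A x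
    _ ≤ ‖T x‖ * ‖x‖ := re_inner_le_norm _ _
    _ ≤ ‖T‖ * ‖x‖ * ‖x‖ := by gcongr; exact le_opNorm T x
    _ = ‖T‖ * ‖x‖ ^ 2 := by ring

theorem norm_inner_apply_self_sq_le_half_norm_adjoint_mul_add (A : E →L[𝕜] E) (x : E) :
    ‖⟪A x, x⟫_𝕜‖ ^ 2 ≤ (1 / 2) * ‖adjoint A * A + A * adjoint A‖ * ‖x‖ ^ 4 := by
  have hAMGM : ‖A x‖ * ‖adjoint A x‖ ≤ (1 / 2) * (‖A x‖ ^ 2 + ‖adjoint A x‖ ^ 2) := by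
    nlinarith [sq_nonneg (‖A x‖ - ‖adjoint A x‖)]
  calc ‖⟪A x, x⟫_𝕜‖ ^ 2 ≤ ‖A x‖ * ‖adjoint A x‖ * ‖x‖ ^ 2 :=
        norm_inner_apply_self_sq_le_mul_norm_adjoint_apply A x
    _ ≤ (1 / 2) * (‖A x‖ ^ 2 + ‖adjoint A x‖ ^ 2) * ‖x‖ ^ 2 := by gcongr
    _ ≤ (1 / 2) * (‖adjoint A * A + A * adjoint A‖ * ‖x‖ ^ 2) * ‖x‖ ^ 2 := by
        gcongr; exact norm_apply_sq_add_norm_adjoint_apply_sq_le A x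
    _ = (1 / 2) * ‖adjoint A * A + A * adjoint A‖ * ‖x‖ ^ 4 := by ring

end ContinuousLinearMap

section NumericalRadius

variable {H : Type*} [NormedAddCommGroup H] [InnerProductSpace ℂ H]

theorem numRad_nonneg (A : H →L[ℂ] H) : 0 ≤ numRad A :=
  Real.sSup_nonneg fun _ ⟨_, _, hr⟩ => hr ▸ norm_nonneg _

theorem numRad_le {A : H →L[ℂ] H} {c : ℝ} (hc : 0 ≤ c)
    (h : ∀ x : H, ‖x‖ = 1 → ‖⟪A x, x⟫_ℂ‖ ≤ c) : numRad A ≤ c :=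
  Real.sSup_le (fun _ ⟨x, hx, hr⟩ => hr ▸ h x hx) hc

end NumericalRadius

theorem kittaneh {H : Type*} [NormedAddCommGroup H] [InnerProductSpace ℂ H]
    [CompleteSpace H] (A : H →L[ℂ] H) :
    numRad A ^ 2 ≤ (1 / 2) * ‖adjoint A * A + A * adjoint A‖ := by
  set C := (1 / 2) * ‖adjoint A * A + A * adjoint A‖
  have hC : 0 ≤ C := by positivity
  have hsqrt : numRad A ≤ √C := numRad_le (Real.sqrt_nonneg C) fun x hx => by
    have h := norm_inner_apply_self_sq_le_half_norm_adjoint_mul_add A x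
    rw [hx, one_pow, mul_one] at h
    exact Real.le_sqrt_of_sq_le h
  calc numRad A ^ 2 ≤ √C ^ 2 := pow_le_pow_left₀ (numRad_nonneg A) hsqrt 2
    _ = C := Real.sq_sqrt hC
end

section
/- Let A, B ∈ B(H) and let T = [[0, A],[B, 0]] act on H ⊕ H by T(x ⊕ y) = (Ay) ⊕ (Bx). Then w(T) ≤ (1/2)(‖A‖ + ‖B‖). -/
/-! For a unit vector `(x, y)`, `⟪T (x, y), (x, y)⟫ = ⟪A y, x⟫ + ⟪B x, y⟫` has modulus at most
`(‖A‖ + ‖B‖) ‖x‖ ‖y‖`, and `‖x‖ ‖y‖ ≤ (‖x‖² + ‖y‖²) / 2 = 1 / 2` by AM-GM. -/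

open ContinuousLinearMap

theorem numRad_le_of_forall_norm_inner_le {H : Type*} [NormedAddCommGroup H]
    [InnerProductSpace ℂ H] {T : H →L[ℂ] H} {c : ℝ} (hc : 0 ≤ c)
    (h : ∀ x : H, ‖x‖ = 1 → ‖(inner ℂ (T x) x : ℂ)‖ ≤ c) : numRad T ≤ c :=
  Real.sSup_le (by rintro r ⟨x, hx, rfl⟩; exact h x hx) hc

theorem norm_inner_apply_add_inner_apply_le {𝕜 E F : Type*} [RCLike 𝕜]
    [NormedAddCommGroup E] [InnerProductSpace 𝕜 E] [NormedAddCommGroup F] [InnerProductSpace 𝕜 F]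
    (A : F →L[𝕜] E) (B : E →L[𝕜] F) (x : E) (y : F) :
    ‖inner 𝕜 (A y) x + inner 𝕜 (B x) y‖ ≤ (‖A‖ + ‖B‖) * (‖x‖ * ‖y‖) :=
  calc ‖inner 𝕜 (A y) x + inner 𝕜 (B x) y‖
      ≤ ‖A y‖ * ‖x‖ + ‖B x‖ * ‖y‖ :=
        (norm_add_le _ _).trans (add_le_add (norm_inner_le_norm _ _) (norm_inner_le_norm _ _))
    _ ≤ ‖A‖ * ‖y‖ * ‖x‖ + ‖B‖ * ‖x‖ * ‖y‖ := by
        gcongr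
        exacts [A.le_opNorm y, B.le_opNorm x]
    _ = (‖A‖ + ‖B‖) * (‖x‖ * ‖y‖) := by ring

theorem mul_le_half_of_sq_add_sq_eq_one {a b : ℝ} (h : a ^ 2 + b ^ 2 = 1) : a * b ≤ 1 / 2 := by
  nlinarith [two_mul_le_add_sq a b]

theorem block_numRad_le_general {H : Type*} [NormedAddCommGroup H] [InnerProductSpace ℂ H]
    (A B : H →L[ℂ] H)
    (T : WithLp 2 (H × H) →L[ℂ] WithLp 2 (H × H))
    (hT : ∀ x y : H, T ((WithLp.equiv 2 (H × H)).symm (x, y)) =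
      (WithLp.equiv 2 (H × H)).symm (A y, B x)) :
    numRad T ≤ (1 / 2) * (‖A‖ + ‖B‖) := by
  refine numRad_le_of_forall_norm_inner_le (by positivity) ?_
  rintro ⟨x, y⟩ hxy
  have hnorm : ‖x‖ ^ 2 + ‖y‖ ^ 2 = 1 := by
    simpa [hxy] using (WithLp.prod_norm_sq_eq_of_L2 (WithLp.toLp 2 (x, y))).symm
  have hinner : inner ℂ (T (WithLp.toLp 2 (x, y))) (WithLp.toLp 2 (x, y))
      = inner ℂ (A y) x + inner ℂ (B x) y := by
    rw [← WithLp.equiv_symm_apply, hT, WithLp.prod_inner_apply]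
    rfl
  calc ‖inner ℂ (T (WithLp.toLp 2 (x, y))) (WithLp.toLp 2 (x, y))‖
      ≤ (‖A‖ + ‖B‖) * (‖x‖ * ‖y‖) := hinner ▸ norm_inner_apply_add_inner_apply_le A B x y
    _ ≤ (‖A‖ + ‖B‖) * (1 / 2) := by gcongr; exact mul_le_half_of_sq_add_sq_eq_one hnorm
    _ = 1 / 2 * (‖A‖ + ‖B‖) := mul_comm _ _

theorem block_numRad_le {H : Type*} [NormedAddCommGroup H] [InnerProductSpace ℂ H]
    [CompleteSpace H] (A B : H →L[ℂ] H)
    (T : WithLp 2 (H × H) →L[ℂ] WithLp 2 (H × H))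
    (hT : ∀ x y : H, T ((WithLp.equiv 2 (H × H)).symm (x, y)) =
      (WithLp.equiv 2 (H × H)).symm (A y, B x)) :
    numRad T ≤ (1 / 2) * (‖A‖ + ‖B‖) :=
  block_numRad_le_general A B T hT
end

section
/- For every bounded linear operator A on a complex Hilbert space and every unit vector x, |⟨Ax, x⟩|² ≤ (1/4)⟨(|A|² + |A*|²)x, x⟩ + (1/2)|⟨ |A*| |A| x, x⟩|, where |A| = (A*A)^{1/2} and |A*| = (AA*)^{1/2}. -/
/-!
Write `P = |A|` and `Q = |A*|`. Since `‖A y‖ = ‖P y‖`, the map `P y ↦ A y` extends to a partial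
isometry `U` with `A = U P` and `U* U P = P`; then `(U P U*)² = A A*`, so `Q = U P U*` by uniqueness
of positive square roots. Cauchy–Schwarz for the positive form `⟨P ·, ·⟩` now gives the mixed
Schwarz inequality `|⟨A x, x⟩|² ≤ ⟨P x, x⟩ ⟨Q x, x⟩ = |⟨P x, x⟩ ⟨x, Q x⟩|`. Buzano's inequality
bounds the latter by `(‖P x‖ ‖Q x‖ + |⟨P x, Q x⟩|) / 2`, and AM–GM together with
`‖P x‖² + ‖Q x‖² = ⟨(A* A + A A*) x, x⟩` and `⟨P x, Q x⟩ = ⟨Q P x, x⟩` finishes the proof.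
-/

open ContinuousLinearMap

theorem LinearMap.denseRange_codRestrict_topologicalClosure_range {R M N : Type*} [Semiring R]
    [AddCommMonoid M] [Module R M] [AddCommMonoid N] [Module R N] [TopologicalSpace N]
    [ContinuousAdd N] [ContinuousConstSMul R N] (T : M →ₗ[R] N) :
    DenseRange (T.codRestrict (LinearMap.range T).topologicalClosure
      fun x => Submodule.le_topologicalClosure _ ⟨x, rfl⟩) := by
  rw [DenseRange, Subtype.dense_iff, ← Set.range_comp]
  exact (Submodule.topologicalClosure_coe _).le

section PartialIsometry

variable {𝕜 E F G : Type*} [RCLike 𝕜]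
  [NormedAddCommGroup E] [InnerProductSpace 𝕜 E]
  [NormedAddCommGroup F] [InnerProductSpace 𝕜 F] [CompleteSpace F]
  [NormedAddCommGroup G] [InnerProductSpace 𝕜 G] [CompleteSpace G]

theorem norm_apply_eq_of_adjoint_comp_self_eq [CompleteSpace E] {S : E →L[𝕜] F} {T : E →L[𝕜] G}
    (h : adjoint S ∘L S = adjoint T ∘L T) (x : E) : ‖S x‖ = ‖T x‖ := by
  rw [apply_norm_eq_sqrt_inner_adjoint_left, apply_norm_eq_sqrt_inner_adjoint_left, h]

theorem exists_comp_eq_and_adjoint_comp_self_comp_eq {S : E →L[𝕜] G} {T : E →L[𝕜] F}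
    (h : ∀ x, ‖S x‖ = ‖T x‖) :
    ∃ U : F →L[𝕜] G, U ∘L T = S ∧ (adjoint U ∘L U) ∘L T = T := by
  set M := (LinearMap.range (T : E →ₗ[𝕜] F)).topologicalClosure
  have hTM : ∀ x, T x ∈ M := fun x => Submodule.le_topologicalClosure _ ⟨x, rfl⟩
  set T' : E →ₗ[𝕜] M := (T : E →ₗ[𝕜] F).codRestrict M hTM
  have hdense : DenseRange T' := (T : E →ₗ[𝕜] F).denseRange_codRestrict_topologicalClosure_range
  set V : M →L[𝕜] G := (S : E →ₗ[𝕜] G).extendOfNorm T'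
  have hVT : ∀ x, V (T' x) = S x :=
    LinearMap.extendOfNorm_eq hdense ⟨1, fun x => by simp [h, T']⟩
  have hVnorm : ∀ m, ‖V m‖ = ‖m‖ := fun m =>
    hdense.induction_on m (isClosed_eq (by fun_prop) (by fun_prop)) fun x => by
      simp [hVT, h, T']
  have hproj : ∀ x, M.orthogonalProjectionOnto (T x) = T' x := fun x =>
    Submodule.orthogonalProjectionOnto_mem_subspace_eq_self (T' x)
  refine ⟨V ∘L M.orthogonalProjectionOnto, ?_, ?_⟩
  · ext x
    simp [hproj, hVT]
  · ext x
    refine ext_inner_right 𝕜 fun v => ?_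
    rw [comp_apply, comp_apply, adjoint_inner_left]
    change inner 𝕜 (V (M.orthogonalProjectionOnto (T x))) (V (M.orthogonalProjectionOnto v)) = _
    rw [hproj]
    exact ((LinearIsometry.mk (V : M →ₗ[𝕜] G) hVnorm).inner_map_map _ _).trans
      (Submodule.inner_orthogonalProjectionOnto_eq_of_mem_left _ _)

end PartialIsometry

theorem eq_mul_mul_star_of_mul_self_eq {A : Type*} [CStarAlgebra A] [PartialOrder A]
    [StarOrderedRing A] {a p q u : A} (hp : 0 ≤ p) (hq : 0 ≤ q) (hup : u * p = a)
    (hp_fix : star u * u * p = p) (hq2 : q * q = a * star a) : q = u * p * star u := by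
  have hconj : (u * p * star u) * (u * p * star u) = a * star a := by
    rw [← hup, star_mul, (IsSelfAdjoint.of_nonneg hp).star_eq]
    calc u * p * star u * (u * p * star u) = u * p * (star u * u * p) * star u := by noncomm_ring
      _ = u * p * (p * star u) := by rw [hp_fix, mul_assoc]
  rw [← CFC.sqrt_unique hq2 hq, CFC.sqrt_unique hconj (star_right_conjugate_nonneg hp u)]

section Complex

variable {H : Type*} [NormedAddCommGroup H] [InnerProductSpace ℂ H] [CompleteSpace H]

theorem ContinuousLinearMap.IsPositive.norm_inner_sq_le {P : H →L[ℂ] H} (hP : P.IsPositive)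
    (u v : H) : ‖inner ℂ (P u) v‖ ^ 2 ≤ (inner ℂ (P u) u).re * (inner ℂ (P v) v).re := by
  set R := CFC.sqrt P
  have hR : R.IsPositive := (nonneg_iff_isPositive R).mp (CFC.sqrt_nonneg P)
  have hRR : ∀ w, R (R w) = P w := fun w => by
    rw [← mul_apply_eq_comp, CFC.sqrt_mul_sqrt_self P ((nonneg_iff_isPositive P).mpr hP)]
  have hPR : ∀ w z, inner ℂ (P w) z = inner ℂ (R w) (R z) := fun w z => by
    rw [← hRR, hR.inner_left_eq_inner_right]
  have hre : ∀ w, (inner ℂ (P w) w).re = ‖R w‖ ^ 2 := fun w => by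
    rw [hPR, ← inner_self_eq_norm_sq (𝕜 := ℂ)]; rfl
  rw [hPR, hre, hre, ← mul_pow]
  gcongr
  exact norm_inner_le_norm _ _

theorem norm_inner_sq_le_re_inner_mul_re_inner {A P Q : H →L[ℂ] H}
    (hP : P.IsPositive) (hP2 : P * P = adjoint A * A)
    (hQ : Q.IsPositive) (hQ2 : Q * Q = A * adjoint A) (x y : H) :
    ‖inner ℂ (A x) y‖ ^ 2 ≤ (inner ℂ (P x) x).re * (inner ℂ (Q y) y).re := by
  have hPadj : adjoint P = P := hP.isSelfAdjoint
  obtain ⟨U, hUP, hUUP⟩ := exists_comp_eq_and_adjoint_comp_self_comp_eq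
    (norm_apply_eq_of_adjoint_comp_self_eq (S := A) (T := P) (by rw [hPadj]; exact hP2.symm))
  have hQU : Q = U * P * adjoint U := by
    simp only [← star_eq_adjoint] at hQ2 hUUP ⊢
    exact eq_mul_mul_star_of_mul_self_eq ((nonneg_iff_isPositive P).mpr hP)
      ((nonneg_iff_isPositive Q).mpr hQ) hUP (by rw [mul_assoc]; exact hUUP) hQ2
  have hAxy : inner ℂ (A x) y = inner ℂ (P x) (adjoint U y) := by
    rw [← hUP, comp_apply, adjoint_inner_right]
  have hQy : inner ℂ (Q y) y = inner ℂ (P (adjoint U y)) (adjoint U y) := by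
    rw [hQU, mul_apply_eq_comp, mul_apply_eq_comp, ← adjoint_inner_right]
  rw [hAxy, hQy]
  exact hP.norm_inner_sq_le x (adjoint U y)

end Complex

theorem two_mul_norm_inner_mul_inner_le {𝕜 E : Type*} [RCLike 𝕜] [NormedAddCommGroup E]
    [InnerProductSpace 𝕜 E] (a b : E) {x : E} (hx : ‖x‖ = 1) :
    2 * ‖inner 𝕜 a x * inner 𝕜 x b‖ ≤ ‖a‖ * ‖b‖ + ‖inner 𝕜 a b‖ := by
  -- the reflection of `b` in the line through `x` has the norm of `b`
  have hr : inner 𝕜 a ((𝕜 ∙ x).reflection b) = 2 * (inner 𝕜 a x * inner 𝕜 x b) - inner 𝕜 a b := by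
    rw [Submodule.reflection_apply, Submodule.starProjection_unit_singleton 𝕜 hx, inner_sub_right,
      inner_smul_right_eq_smul, inner_smul_right]
    simp only [nsmul_eq_mul, Nat.cast_ofNat]
    ring
  calc 2 * ‖inner 𝕜 a x * inner 𝕜 x b‖
      = ‖inner 𝕜 a ((𝕜 ∙ x).reflection b) + inner 𝕜 a b‖ := by
        rw [hr, sub_add_cancel, norm_mul (2 : 𝕜), RCLike.norm_two]
    _ ≤ ‖a‖ * ‖(𝕜 ∙ x).reflection b‖ + ‖inner 𝕜 a b‖ :=
        (norm_add_le _ _).trans (by gcongr; exact norm_inner_le_norm _ _)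
    _ = ‖a‖ * ‖b‖ + ‖inner 𝕜 a b‖ := by rw [LinearIsometryEquiv.norm_map]

theorem pointwise_refined_bound {H : Type*} [NormedAddCommGroup H] [InnerProductSpace ℂ H]
    [CompleteSpace H] (A P Q : H →L[ℂ] H)
    (hP : P.IsPositive) (hP2 : P * P = adjoint A * A)
    (hQ : Q.IsPositive) (hQ2 : Q * Q = A * adjoint A)
    (x : H) (hx : ‖x‖ = 1) :
    ‖(inner ℂ (A x) x : ℂ)‖ ^ 2 ≤
      (1 / 4) * (inner ℂ ((adjoint A * A + A * adjoint A) x) x : ℂ).re +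
        (1 / 2) * ‖(inner ℂ ((Q * P) x) x : ℂ)‖ := by
  have hsum : (inner ℂ ((adjoint A * A + A * adjoint A) x) x).re = ‖P x‖ ^ 2 + ‖Q x‖ ^ 2 := by
    rw [apply_norm_sq_eq_inner_adjoint_left, apply_norm_sq_eq_inner_adjoint_left,
      hP.isSelfAdjoint.adjoint_eq, hQ.isSelfAdjoint.adjoint_eq, ← hP2, ← hQ2, add_apply,
      inner_add_left, Complex.add_re]
    rfl
  have hQP : inner ℂ ((Q * P) x) x = inner ℂ (P x) (Q x) := by
    rw [mul_apply_eq_comp, hQ.inner_left_eq_inner_right]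
  calc ‖inner ℂ (A x) x‖ ^ 2 ≤ (inner ℂ (P x) x).re * (inner ℂ (Q x) x).re :=
        norm_inner_sq_le_re_inner_mul_re_inner hP hP2 hQ hQ2 x x
    _ ≤ ‖inner ℂ (P x) x * inner ℂ x (Q x)‖ := by
        rw [norm_mul, norm_inner_symm (𝕜 := ℂ) x]
        exact mul_le_mul (Complex.re_le_norm _) (Complex.re_le_norm _)
          (hQ.re_inner_nonneg_left x) (norm_nonneg _)
    _ ≤ (1 / 2) * (‖P x‖ * ‖Q x‖ + ‖inner ℂ (P x) (Q x)‖) := by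
        linarith [two_mul_norm_inner_mul_inner_le (𝕜 := ℂ) (P x) (Q x) hx]
    _ ≤ (1 / 4) * (‖P x‖ ^ 2 + ‖Q x‖ ^ 2) + (1 / 2) * ‖inner ℂ (P x) (Q x)‖ := by
        nlinarith [sq_nonneg (‖P x‖ - ‖Q x‖)]
    _ = _ := by rw [hsum, hQP]
end

section
/- For every bounded linear operator A on a complex Hilbert space H and r ≥ 1, w(A)^{2r} ≤ (1/4)‖ |A|^{2r} + |A*|^{2r} ‖ + (1/2)‖A‖^{2r}, where |A|^{2r} and |A*|^{2r} are defined via continuous functional calculus on the positive operators |A| and |A*|. -/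
open ContinuousLinearMap

/-!
For a unit vector `x`, `|⟪A x, x⟫|² ≤ ‖A x‖ ‖A* x‖`, so with `a = ‖A x‖ ^ r` and `b = ‖A* x‖ ^ r`
we get `|⟪A x, x⟫| ^ (2r) ≤ ab ≤ (a² + b²)/4 + ab/2`, and `ab ≤ ‖A‖ ^ (2r)`. Since `‖A x‖ = ‖P x‖`,
McCarthy's inequality `⟪P² x, x⟫ ^ r ≤ ⟪P ^ (2r) x, x⟫` gives `a² ≤ ⟪P ^ (2r) x, x⟫`, and likewise
`b² ≤ ⟪Q ^ (2r) x, x⟫`, whose sum is at most `‖P ^ (2r) + Q ^ (2r)‖`.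
-/

open scoped InnerProductSpace

theorem Real.rpow_tangent_le {r c t : ℝ} (hr : 1 ≤ r) (hc : 0 < c) (ht : 0 ≤ t) :
    c ^ r + r * c ^ (r - 1) * (t - c) ≤ t ^ r := by
  have hber := one_add_mul_self_le_rpow_one_add (s := t / c - 1) (by
    have : 0 ≤ t / c := by positivity
    linarith) hr
  rw [add_sub_cancel, Real.div_rpow ht hc.le, le_div_iff₀ (by positivity)] at hber
  rw [Real.rpow_sub_one hc.ne']
  calc c ^ r + r * (c ^ r / c) * (t - c) = (1 + r * (t / c - 1)) * c ^ r := by field_simp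
    _ ≤ t ^ r := hber

lemma Real.rpow_sq {y : ℝ} (hy : 0 ≤ y) (r : ℝ) : (y ^ r) ^ 2 = y ^ (2 * r) := by
  rw [← Real.rpow_mul_natCast hy, mul_comm, Nat.cast_ofNat]

section

variable {H : Type*} [NormedAddCommGroup H] [InnerProductSpace ℂ H]

namespace ContinuousLinearMap

lemma re_inner_apply_self_le_of_le {S T : H →L[ℂ] H} (h : S ≤ T) (x : H) :
    RCLike.re ⟪S x, x⟫_ℂ ≤ RCLike.re ⟪T x, x⟫_ℂ := by
  have := ((le_def S T).mp h).re_inner_nonneg_left x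
  rwa [sub_apply, inner_sub_left, map_sub, sub_nonneg] at this

lemma re_inner_apply_self_le_opNorm (T : H →L[ℂ] H) {x : H} (hx : ‖x‖ = 1) :
    RCLike.re ⟪T x, x⟫_ℂ ≤ ‖T‖ :=
  calc RCLike.re ⟪T x, x⟫_ℂ ≤ ‖⟪T x, x⟫_ℂ‖ := RCLike.re_le_norm _
    _ ≤ ‖T x‖ * ‖x‖ := norm_inner_le_norm _ _
    _ ≤ ‖T‖ := by simpa [hx] using T.unit_le_opNorm x hx.le

variable [CompleteSpace H]

lemma norm_inner_apply_self_sq_le (A : H →L[ℂ] H) (x : H) :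
    ‖⟪A x, x⟫_ℂ‖ ^ 2 ≤ ‖A x‖ * ‖adjoint A x‖ * ‖x‖ ^ 2 := by
  have h₁ := norm_inner_le_norm (𝕜 := ℂ) (A x) x
  have h₂ := norm_inner_le_norm (𝕜 := ℂ) x (adjoint A x)
  rw [adjoint_inner_right] at h₂
  calc ‖⟪A x, x⟫_ℂ‖ ^ 2 = ‖⟪A x, x⟫_ℂ‖ * ‖⟪A x, x⟫_ℂ‖ := sq _
    _ ≤ (‖A x‖ * ‖x‖) * (‖x‖ * ‖adjoint A x‖) := by gcongr
    _ = ‖A x‖ * ‖adjoint A x‖ * ‖x‖ ^ 2 := by ring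

lemma norm_apply_eq_of_adjoint_mul_self_eq {S T : H →L[ℂ] H}
    (h : adjoint S * S = adjoint T * T) (x : H) : ‖S x‖ = ‖T x‖ := by
  rw [apply_norm_eq_sqrt_inner_adjoint_left, apply_norm_eq_sqrt_inner_adjoint_left T]
  exact congrArg (fun U : H →L[ℂ] H => √(RCLike.re ⟪U x, x⟫_ℂ)) h

lemma norm_inner_apply_self_rpow_le (A : H →L[ℂ] H) {x : H} (hx : ‖x‖ = 1) {r : ℝ}
    (hr : 0 ≤ r) : ‖⟪A x, x⟫_ℂ‖ ^ (2 * r) ≤ ‖A x‖ ^ r * ‖adjoint A x‖ ^ r := by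
  rw [Real.rpow_mul (norm_nonneg _), Real.rpow_two,
    ← Real.mul_rpow (norm_nonneg _) (norm_nonneg _)]
  gcongr
  simpa [hx] using norm_inner_apply_self_sq_le A x

lemma rpow_mul_rpow_adjoint_le_opNorm_rpow (A : H →L[ℂ] H) {x : H} (hx : ‖x‖ = 1) {r : ℝ}
    (hr : 0 ≤ r) : ‖A x‖ ^ r * ‖adjoint A x‖ ^ r ≤ ‖A‖ ^ (2 * r) := by
  have hA' := (adjoint A).unit_le_opNorm x hx.le
  rw [LinearIsometryEquiv.norm_map] at hA'
  calc ‖A x‖ ^ r * ‖adjoint A x‖ ^ r ≤ ‖A‖ ^ r * ‖A‖ ^ r := by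
        gcongr
        exact A.unit_le_opNorm x hx.le
    _ = ‖A‖ ^ (2 * r) := by rw [← sq, Real.rpow_sq (norm_nonneg _)]

end ContinuousLinearMap

namespace CFC

variable [CompleteSpace H] {P : H →L[ℂ] H}

lemma smul_one_add_smul_le_rpow (hP : 0 ≤ P) {r c : ℝ} (hr : 1 ≤ r) (hc : 0 < c) :
    c ^ r • 1 + (r * c ^ (r - 1)) • (P - c • 1) ≤ P ^ r := by
  have hcont : Continuous (fun t : ℝ => t ^ r) := Real.continuous_rpow_const (by linarith)
  calc c ^ r • 1 + (r * c ^ (r - 1)) • (P - c • 1)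
      = cfc (fun t : ℝ => c ^ r + r * c ^ (r - 1) * (t - c)) P := by
        rw [cfc_add .., cfc_const_mul .., cfc_sub .., cfc_id' .., cfc_const .., cfc_const ..,
          Algebra.algebraMap_eq_smul_one, Algebra.algebraMap_eq_smul_one]
    _ ≤ cfc (fun t : ℝ => t ^ r) P :=
        cfc_mono fun t ht => Real.rpow_tangent_le hr hc (spectrum_nonneg_of_nonneg hP ht)
    _ = P ^ r := (rpow_eq_cfc_real hP).symm

/-- McCarthy's inequality: evaluate at `x` the operator inequality saying that the tangent line of
`t ↦ t ^ r` at `t = ⟪P x, x⟫` lies below `P ^ r`. -/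
theorem re_inner_apply_self_rpow_le (hP : 0 ≤ P) {r : ℝ} (hr : 1 ≤ r) {x : H} (hx : ‖x‖ = 1) :
    RCLike.re ⟪P x, x⟫_ℂ ^ r ≤ RCLike.re ⟪(P ^ r) x, x⟫_ℂ := by
  set c := RCLike.re ⟪P x, x⟫_ℂ with hc_def
  have hc_nonneg : 0 ≤ c := ((nonneg_iff_isPositive P).mp hP).re_inner_nonneg_left x
  rcases hc_nonneg.eq_or_lt with hc | hc
  · rw [← hc, Real.zero_rpow (by linarith)]
    exact ((nonneg_iff_isPositive _).mp rpow_nonneg).re_inner_nonneg_left x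
  · calc c ^ r = RCLike.re ⟪(c ^ r • 1 + (r * c ^ (r - 1)) • (P - c • 1)) x, x⟫_ℂ := by
          simp [hx, hc_def]
      _ ≤ RCLike.re ⟪(P ^ r) x, x⟫_ℂ :=
          re_inner_apply_self_le_of_le (smul_one_add_smul_le_rpow hP hr hc) x

lemma norm_apply_rpow_two_mul_le (hP : 0 ≤ P) {r : ℝ} (hr : 1 ≤ r) {x : H} (hx : ‖x‖ = 1) :
    ‖P x‖ ^ (2 * r) ≤ RCLike.re ⟪(P ^ (2 * r)) x, x⟫_ℂ := by
  have hP2 : P ^ (2 : ℝ) = adjoint P ∘L P := by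
    rw [← Nat.cast_ofNat, rpow_natCast P 2, sq,
      ((nonneg_iff_isPositive P).mp hP).isSelfAdjoint.adjoint_eq, mul_def]
  rw [Real.rpow_mul (norm_nonneg _), Real.rpow_two, apply_norm_sq_eq_inner_adjoint_left, ← hP2,
    ← rpow_rpow_of_exponent_nonneg P 2 r zero_le_two (by linarith)]
  exact re_inner_apply_self_rpow_le rpow_nonneg hr hx

end CFC

lemma numRad_rpow_le {A : H →L[ℂ] H} {p B : ℝ} (hp : 0 < p) (hB : 0 ≤ B)
    (h : ∀ x : H, ‖x‖ = 1 → ‖⟪A x, x⟫_ℂ‖ ^ p ≤ B) : numRad A ^ p ≤ B := by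
  have hnonneg : 0 ≤ numRad A := Real.sSup_nonneg <| by
    rintro _ ⟨x, -, rfl⟩
    exact norm_nonneg _
  rw [← Real.le_rpow_inv_iff_of_pos hnonneg hB hp]
  refine Real.sSup_le ?_ (by positivity)
  rintro _ ⟨x, hx, rfl⟩
  exact (Real.le_rpow_inv_iff_of_pos (norm_nonneg _) hB hp).mpr (h x hx)

end

theorem numRad_rpow_bound {H : Type*} [NormedAddCommGroup H] [InnerProductSpace ℂ H]
    [CompleteSpace H] (A P Q : H →L[ℂ] H)
    (hP : P.IsPositive) (hP2 : P * P = adjoint A * A)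
    (hQ : Q.IsPositive) (hQ2 : Q * Q = A * adjoint A)
    (r : ℝ) (hr : 1 ≤ r) :
    numRad A ^ (2 * r) ≤
      (1 / 4) * ‖CFC.rpow P (2 * r) + CFC.rpow Q (2 * r)‖ + (1 / 2) * ‖A‖ ^ (2 * r) := by
  have hAP : ∀ x, ‖A x‖ = ‖P x‖ := norm_apply_eq_of_adjoint_mul_self_eq <| by
    rw [← hP2, hP.isSelfAdjoint.adjoint_eq]
  have hAQ : ∀ x, ‖adjoint A x‖ = ‖Q x‖ := norm_apply_eq_of_adjoint_mul_self_eq <| by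
    rw [adjoint_adjoint, ← hQ2, hQ.isSelfAdjoint.adjoint_eq]
  refine numRad_rpow_le (by positivity) (by positivity) fun x hx => ?_
  set a := ‖A x‖ ^ r
  set b := ‖adjoint A x‖ ^ r
  have ha : a ^ 2 ≤ RCLike.re ⟪(P ^ (2 * r)) x, x⟫_ℂ := by
    rw [Real.rpow_sq (norm_nonneg _), hAP]
    exact CFC.norm_apply_rpow_two_mul_le ((nonneg_iff_isPositive P).mpr hP) hr hx
  have hb : b ^ 2 ≤ RCLike.re ⟪(Q ^ (2 * r)) x, x⟫_ℂ := by
    rw [Real.rpow_sq (norm_nonneg _), hAQ]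
    exact CFC.norm_apply_rpow_two_mul_le ((nonneg_iff_isPositive Q).mpr hQ) hr hx
  have hsum := re_inner_apply_self_le_opNorm (P ^ (2 * r) + Q ^ (2 * r)) hx
  rw [add_apply, inner_add_left, map_add] at hsum
  calc ‖⟪A x, x⟫_ℂ‖ ^ (2 * r) ≤ a * b := norm_inner_apply_self_rpow_le A hx (by linarith)
    _ ≤ (a ^ 2 + b ^ 2) / 4 + a * b / 2 := by nlinarith [sq_nonneg (a - b)]
    _ ≤ 1 / 4 * ‖P ^ (2 * r) + Q ^ (2 * r)‖ + 1 / 2 * ‖A‖ ^ (2 * r) := by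
      linarith [rpow_mul_rpow_adjoint_le_opNorm_rpow A hx (by linarith : 0 ≤ r)]
end
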